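/- arXiv:2509.05516 — 2 statements merged into one kernel-verified Lean document; each statement's English description precedes it below -/
import Mathlib

section
/- Let λ = (λ_1, …, λ_ℓ) be a partition and r ≥ 0 an integer, with K a field of characteristic zero. If r < |λ| and λ ≠ ∅, then for every n the Σ_n-coinvariants of Res^{Σ_{n+r}}_{Σ_n} V_{λ⟨n+r⟩} vanish, where V_{λ⟨n+r⟩} is the irreducible Σ_{n+r}-representation associated to the padded partition λ⟨n+r⟩ = (n+r−|λ|, λ_1, …, λ_ℓ) whenever n+r ≥ |λ| + λ_1. -/
/-!
Over a field of characteristic zero, averaging over `Σ_n` shows that `v - avg v` lies in the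
augmentation submodule and `avg v` is `Σ_n`-invariant, so the coinvariants vanish as soon as
the `Σ_n`-invariants do. These vanish by induction on `r`, for every diagram `ν` of size `n + r`
with `r + ν_1 < |ν|` (for `ν = λ⟨n + r⟩` this is `r < |λ|`). For `r = 0`, the invariants form a
subrepresentation of the irreducible `V_ν`, and not all of it since `V_ν` is not trivial (`ν` has
more than one row). For `r > 0`, by Maschke the restriction of `V_ν` to `Σ_{n+r-1}` is built from
irreducible subrepresentations, each isomorphic by the branching rule to some `V_μ` with `μ ≤ ν`
and `|μ| = |ν| - 1`; since `μ_1 ≤ ν_1`, the inductive hypothesis applies to `μ`.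
-/

open Module
open scoped Classical

/-- The submodule of `G`-equivariant linear maps between two representations. -/
def equivariantMaps {K G V W : Type*} [CommSemiring K] [Monoid G]
    [AddCommMonoid V] [Module K V] [AddCommMonoid W] [Module K W]
    (ρ : Representation K G V) (τ : Representation K G W) :
    Submodule K (V →ₗ[K] W) where
  carrier := {f | ∀ g v, f (ρ g v) = τ g (f v)}
  add_mem' := by intro f h hf hh g v; simp [hf g v, hh g v]
  zero_mem' := by intro g v; simp
  smul_mem' := by intro a f hf g v; simp [hf g v]

/-- The standard inclusion `Σ_m → Σ_n` (as permutations fixing the last `n - m` letters). -/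
noncomputable def permIncl (m n : ℕ) (h : m ≤ n) :
    Equiv.Perm (Fin m) →* Equiv.Perm (Fin n) :=
  Equiv.Perm.viaEmbeddingHom (Fin.castLEEmb h)

/-- The restriction of a representation of `Σ_n` to `Σ_m ≤ Σ_n`. -/
noncomputable def resPerm {K V : Type*} [CommSemiring K] [AddCommMonoid V] [Module K V]
    {n : ℕ} (m : ℕ) (h : m ≤ n) (ρ : Representation K (Equiv.Perm (Fin n)) V) :
    Representation K (Equiv.Perm (Fin m)) V :=
  ρ.comp (permIncl m n h)

/-- The augmentation submodule of a representation: the span of the elements `g • v - v`. -/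
def coinvariantsKer {K G V : Type*} [CommRing K] [Monoid G] [AddCommGroup V] [Module K V]
    (ρ : Representation K G V) : Submodule K V :=
  Submodule.span K {x | ∃ g v, ρ g v - v = x}

/-- The coinvariants (`H_0`) of a representation. -/
abbrev coinvariants {K G V : Type*} [CommRing K] [Monoid G] [AddCommGroup V] [Module K V]
    (ρ : Representation K G V) := V ⧸ coinvariantsKer ρ

/-- The one-row Young diagram `(m)`. -/
def rowDiagram (m : ℕ) : YoungDiagram :=
  YoungDiagram.ofRowLens [m] (List.pairwise_singleton _ m).sortedGE

/-- The padded Young diagram `λ⟨m⟩ = (m − |λ|, λ_1, …, λ_ℓ)`, defined when `m ≥ |λ| + λ_1`. -/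
def padDiagram (μ : YoungDiagram) (m : ℕ) (h : μ.card + μ.rowLen 0 ≤ m) : YoungDiagram :=
  YoungDiagram.ofRowLens ((m - μ.card) :: μ.rowLens) (by
    refine List.Pairwise.sortedGE (List.pairwise_cons.mpr ⟨?_, μ.rowLens_sorted.pairwise⟩)
    intro b hb
    obtain ⟨i, _, rfl⟩ := List.mem_map.mp hb
    exact le_trans (μ.rowLen_anti 0 i (Nat.zero_le i)) (by omega))

/-- A bundle of data pinning down the irreducible representations `V_μ` of the symmetric groups
over a field `K` of characteristic zero, indexed by Young diagrams `μ` (with `V_μ` a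
representation of `Σ_{|μ|}`): each `V_μ` is absolutely irreducible, the diagrams with one row
index the trivial representations, the branching rule holds, different diagrams give
non-isomorphic representations, and every irreducible representation of `Σ_m` occurs. -/
structure SpechtFamily (K : Type) [Field K] : Type 1 where
  W : YoungDiagram → Type
  acg : ∀ μ, AddCommGroup (W μ)
  mod : ∀ μ, Module K (W μ)
  fd : ∀ μ, FiniteDimensional K (W μ)
  ρ : ∀ (m : ℕ) (μ : YoungDiagram), Representation K (Equiv.Perm (Fin m)) (W μ)
  nontriv : ∀ μ, Nontrivial (W μ)
  irr : ∀ (m : ℕ) (μ : YoungDiagram), μ.card = m →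
    ∀ p : Submodule K (W μ), (∀ g x, x ∈ p → ρ m μ g x ∈ p) → p = ⊥ ∨ p = ⊤
  schur : ∀ (m : ℕ) (μ : YoungDiagram), μ.card = m →
    finrank K (equivariantMaps (ρ m μ) (ρ m μ)) = 1
  hom_ne : ∀ (m : ℕ) (μ ν : YoungDiagram), μ.card = m → ν.card = m → μ ≠ ν →
    finrank K (equivariantMaps (ρ m μ) (ρ m ν)) = 0
  row_trivial : ∀ (m : ℕ) (g : Equiv.Perm (Fin m)), ρ m (rowDiagram m) g = LinearMap.id
  branching : ∀ (m : ℕ) (μ ν : YoungDiagram), μ.card = m → ν.card = m + 1 →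
    finrank K (equivariantMaps (ρ m μ) (resPerm m (Nat.le_succ m) (ρ (m + 1) ν))) =
      if μ ≤ ν then 1 else 0
  complete : ∀ (m : ℕ) (V : Type) [AddCommGroup V] [Module K V] [FiniteDimensional K V]
    (τ : Representation K (Equiv.Perm (Fin m)) V), Nontrivial V →
    (∀ p : Submodule K V, (∀ g x, x ∈ p → τ g x ∈ p) → p = ⊥ ∨ p = ⊤) →
    ∃ μ : YoungDiagram, μ.card = m ∧
      ∃ e : V ≃ₗ[K] W μ, ∀ g x, e (τ g x) = ρ m μ g (e x)

attribute [instance] SpechtFamily.acg SpechtFamily.mod SpechtFamily.fd SpechtFamily.nontriv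

open Representation

namespace Equiv.Perm

theorem viaEmbedding_viaEmbedding {α β γ : Type*} (e : Perm α) (ι : α ↪ β) (κ : β ↪ γ) :
    (e.viaEmbedding ι).viaEmbedding κ = e.viaEmbedding (ι.trans κ) := by
  ext x
  by_cases hx : x ∈ Set.range κ
  · obtain ⟨y, rfl⟩ := hx
    rw [viaEmbedding_apply]
    by_cases hy : y ∈ Set.range ι
    · obtain ⟨z, rfl⟩ := hy
      rw [viaEmbedding_apply]
      exact (viaEmbedding_apply e (ι.trans κ) z).symm
    · rw [viaEmbedding_apply_of_notMem _ _ _ hy, viaEmbedding_apply_of_notMem]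
      rintro ⟨z, hz⟩
      exact hy ⟨z, κ.injective hz⟩
  · rw [viaEmbedding_apply_of_notMem _ _ _ hx, viaEmbedding_apply_of_notMem]
    rintro ⟨z, rfl⟩
    exact hx ⟨ι z, rfl⟩

theorem viaEmbedding_refl {α : Type*} (e : Perm α) :
    e.viaEmbedding (Function.Embedding.refl α) = e :=
  Equiv.ext (viaEmbedding_apply e _)

end Equiv.Perm

theorem permIncl_comp {l m n : ℕ} (hlm : l ≤ m) (hmn : m ≤ n) :
    (permIncl m n hmn).comp (permIncl l m hlm) = permIncl l n (hlm.trans hmn) :=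
  MonoidHom.ext fun σ => σ.viaEmbedding_viaEmbedding _ _

theorem permIncl_self {n : ℕ} (h : n ≤ n) : permIncl n n h = MonoidHom.id _ :=
  MonoidHom.ext Equiv.Perm.viaEmbedding_refl

section Restriction

variable {K V : Type*} [CommSemiring K] [AddCommMonoid V] [Module K V]

theorem resPerm_resPerm {l m n : ℕ} (hlm : l ≤ m) (hmn : m ≤ n)
    (ρ : Representation K (Equiv.Perm (Fin n)) V) :
    resPerm l hlm (resPerm m hmn ρ) = resPerm l (hlm.trans hmn) ρ := by
  rw [resPerm, resPerm, resPerm, MonoidHom.comp_assoc, permIncl_comp]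

theorem resPerm_self {n : ℕ} (h : n ≤ n) (ρ : Representation K (Equiv.Perm (Fin n)) V) :
    resPerm n h ρ = ρ := by
  rw [resPerm, permIncl_self, MonoidHom.comp_id]

end Restriction

namespace YoungDiagram

theorem card_cellsOfRowLens (w : List ℕ) : (YoungDiagram.cellsOfRowLens w).card = w.sum := by
  induction w with
  | nil => rfl
  | cons a w ih =>
    rw [YoungDiagram.cellsOfRowLens, Finset.card_union_of_disjoint, Finset.card_map, ih]
    · simp
    · rw [Finset.disjoint_left]
      rintro ⟨i, j⟩ hfst hsucc
      obtain ⟨_, _, h⟩ := Finset.mem_map.mp hsucc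
      simp only [Finset.mem_product, Finset.mem_singleton] at hfst
      simp_all [Function.Embedding.prodMap]

theorem card_ofRowLens (w : List ℕ) (hw : w.SortedGE) : (ofRowLens w hw).card = w.sum :=
  card_cellsOfRowLens w

theorem sum_rowLens (μ : YoungDiagram) : μ.rowLens.sum = μ.card := by
  conv_rhs => rw [← ofRowLens_to_rowLens_eq_self (μ := μ)]
  exact (card_ofRowLens _ _).symm

theorem rowLen_le_rowLen_of_le {μ ν : YoungDiagram} (h : μ ≤ ν) (i : ℕ) :
    μ.rowLen i ≤ ν.rowLen i := by
  by_contra! hlt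
  exact (mem_iff_lt_rowLen.mp (h (mem_iff_lt_rowLen.mpr hlt))).false

end YoungDiagram

theorem card_rowDiagram (m : ℕ) : (rowDiagram m).card = m := by
  simp [rowDiagram, YoungDiagram.card_ofRowLens]

theorem rowLen_rowDiagram (m : ℕ) : (rowDiagram m).rowLen 0 = m :=
  YoungDiagram.rowLen_ofRowLens (w := [m]) ⟨0, by simp⟩

theorem card_padDiagram (μ : YoungDiagram) (m : ℕ) (h : μ.card + μ.rowLen 0 ≤ m) :
    (padDiagram μ m h).card = m := by
  rw [padDiagram, YoungDiagram.card_ofRowLens, List.sum_cons, YoungDiagram.sum_rowLens]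
  omega

theorem rowLen_padDiagram (μ : YoungDiagram) (m : ℕ) (h : μ.card + μ.rowLen 0 ≤ m) :
    (padDiagram μ m h).rowLen 0 = m - μ.card :=
  YoungDiagram.rowLen_ofRowLens (w := _ :: _) ⟨0, by simp⟩

section Coinvariants

variable {K G V : Type*} [CommRing K] [Group G] [Fintype G] [Invertible (Fintype.card G : K)]
  [AddCommGroup V] [Module K V]

theorem sub_averageMap_mem_coinvariantsKer (ρ : Representation K G V) (v : V) :
    v - ρ.averageMap v ∈ coinvariantsKer ρ := by
  have hv : v - ρ.averageMap v = ⅟(Fintype.card G : K) • ∑ g : G, -(ρ g v - v) := by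
    simp [averageMap, GroupAlgebra.average, map_sum, Finset.sum_sub_distrib, smul_sub,
      Finset.card_univ, ← Nat.cast_smul_eq_nsmul K, smul_smul]
  rw [hv]
  exact Submodule.smul_mem _ _ (Submodule.sum_mem _ fun g _ =>
    Submodule.neg_mem _ (Submodule.subset_span ⟨g, v, rfl⟩))

theorem subsingleton_coinvariants_of_invariants_eq_bot (ρ : Representation K G V)
    (h : ρ.invariants = ⊥) : Subsingleton (coinvariants ρ) := by
  refine Submodule.Quotient.subsingleton_iff.mpr (Submodule.eq_top_iff'.mpr fun v => ?_)
  have hzero : ρ.averageMap v = 0 := by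
    simpa [h] using ρ.averageMap_invariant v
  simpa only [hzero, sub_zero] using sub_averageMap_mem_coinvariantsKer ρ v

end Coinvariants

section Subrepresentation

variable {K G V : Type*} [Ring K] [Monoid G] [AddCommGroup V] [Module K V]
  {ρ : Representation K G V}

theorem Subrepresentation.isCompl_toSubmodule {σ τ : Subrepresentation ρ} (h : IsCompl σ τ) :
    IsCompl σ.toSubmodule τ.toSubmodule :=
  ⟨disjoint_iff.mpr (congrArg Subrepresentation.toSubmodule h.disjoint.eq_bot),
    codisjoint_iff.mpr (congrArg Subrepresentation.toSubmodule h.codisjoint.eq_top)⟩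

theorem Subrepresentation.eq_bot_or_eq_top_of_isAtom {σ : Subrepresentation ρ} (hσ : IsAtom σ)
    (q : Submodule K σ.toSubmodule) (hq : ∀ g x, x ∈ q → σ.toRepresentation g x ∈ q) :
    q = ⊥ ∨ q = ⊤ := by
  let τ : Subrepresentation ρ :=
    ⟨q.map σ.toSubmodule.subtype, fun g _ ⟨y, hy, hyx⟩ => hyx ▸ ⟨_, hq g y hy, rfl⟩⟩
  have hinj := Submodule.map_injective_of_injective σ.toSubmodule.injective_subtype
  refine ((hσ.le_iff (x := τ)).mp (Submodule.map_subtype_le _ q)).imp (fun hτ => ?_) fun hτ => ?_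
  · exact hinj ((congrArg Subrepresentation.toSubmodule hτ).trans (Submodule.map_bot _).symm)
  · exact hinj ((congrArg Subrepresentation.toSubmodule hτ).trans
      (Submodule.map_subtype_top _).symm)

end Subrepresentation

section Invariants

variable {K G H V : Type*} [CommRing K] [Group G] [Group H] [AddCommGroup V] [Module K V]
  {ρ : Representation K G V}

theorem Subrepresentation.disjoint_invariants_comp_iff (σ : Subrepresentation ρ) (u : H →* G) :
    Disjoint σ.toSubmodule (invariants (ρ.comp u)) ↔
      invariants (σ.toRepresentation.comp u) = ⊥ := by
  rw [Submodule.disjoint_def, Submodule.eq_bot_iff]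
  constructor
  · intro h w hw
    exact Subtype.ext (h w w.2 fun g => congrArg Subtype.val (hw g))
  · intro h w hwσ hw
    exact congrArg Subtype.val (h ⟨w, hwσ⟩ fun g => Subtype.ext (hw g))

theorem Representation.mem_invariants_comp_of_add_mem {σ τ : Subrepresentation ρ}
    (hστ : Disjoint σ.toSubmodule τ.toSubmodule) (u : H →* G) {a b : V} (ha : a ∈ σ)
    (hb : b ∈ τ) (hab : a + b ∈ invariants (ρ.comp u)) : a ∈ invariants (ρ.comp u) := by
  intro h
  have hdiff : ρ (u h) a - a = b - ρ (u h) b := by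
    have := hab h
    simp only [MonoidHom.coe_comp, Function.comp_apply, map_add] at this
    rw [sub_eq_sub_iff_add_eq_add, this, add_comm]
  have hmem : ρ (u h) a - a ∈ σ.toSubmodule ⊓ τ.toSubmodule :=
    ⟨σ.toSubmodule.sub_mem (σ.apply_mem_toSubmodule _ ha) ha,
      hdiff ▸ τ.toSubmodule.sub_mem hb (τ.apply_mem_toSubmodule _ hb)⟩
  rw [hστ.eq_bot, Submodule.mem_bot, sub_eq_zero] at hmem
  exact hmem

end Invariants

section Maschke

variable {K G H V : Type*} [Field K] [Group G] [Group H] [AddCommGroup V] [Module K V]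
  [FiniteDimensional K V] {ρ : Representation K G V}

instance : WellFoundedLT (Subrepresentation ρ) :=
  (Monotone.strictMono_of_injective (f := Subrepresentation.toSubmodule) (fun _ _ h => h)
    Subrepresentation.toSubmodule_injective).wellFoundedLT

theorem Representation.invariants_comp_eq_bot_of_forall_isAtom [Finite G]
    [NeZero (Nat.card G : K)] (u : H →* G)
    (h : ∀ σ : Subrepresentation ρ, IsAtom σ → invariants (σ.toRepresentation.comp u) = ⊥) :
    invariants (ρ.comp u) = ⊥ := by
  suffices hall : ∀ σ : Subrepresentation ρ, Disjoint σ.toSubmodule (invariants (ρ.comp u)) from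
    top_disjoint.mp (hall ⊤)
  intro σ
  induction σ using WellFoundedLT.induction with
  | _ σ ih =>
  by_cases hatom : IsAtom σ
  · exact (σ.disjoint_invariants_comp_iff u).mpr (h σ hatom)
  by_cases hbot : σ = ⊥
  · subst hbot
    exact disjoint_bot_left
  obtain ⟨τ, hτσ, hτ⟩ : ∃ τ < σ, τ ≠ ⊥ := by
    simpa [IsAtom, hbot] using hatom
  obtain ⟨τ', hτ'⟩ := exists_isCompl τ
  have hlt : σ ⊓ τ' < σ := by
    refine inf_le_left.lt_of_ne fun heq => hτ (hτ'.disjoint.eq_bot_of_le ?_)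
    exact hτσ.le.trans (inf_eq_left.mp heq)
  have hcompl := Subrepresentation.isCompl_toSubmodule hτ'
  rw [Submodule.disjoint_def]
  intro w hwσ hw
  obtain ⟨a, ha, b, hb, rfl⟩ :=
    Submodule.mem_sup.mp (hcompl.codisjoint.eq_top ▸ Submodule.mem_top : w ∈ _)
  have ha' := mem_invariants_comp_of_add_mem hcompl.disjoint u ha hb hw
  have hb' := mem_invariants_comp_of_add_mem hcompl.disjoint.symm u hb ha (add_comm a b ▸ hw)
  have hbσ : b ∈ (σ ⊓ τ').toSubmodule :=
    ⟨by simpa using σ.toSubmodule.sub_mem hwσ (hτσ.le ha), hb⟩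
  rw [Submodule.disjoint_def.mp (ih τ hτσ) a ha ha',
    Submodule.disjoint_def.mp (ih _ hlt) b hbσ hb', add_zero]

end Maschke

namespace SpechtFamily

variable {K : Type} [Field K] (F : SpechtFamily K)

theorem invariants_eq_bot {m : ℕ} {μ : YoungDiagram} (hμ : μ.card = m)
    (hrow : μ ≠ rowDiagram m) : invariants (F.ρ m μ) = ⊥ := by
  refine (F.irr m μ hμ _ fun g v hv => ?_).resolve_right fun htop => ?_
  · rw [hv g]
    exact hv
  · have htriv (g : Equiv.Perm (Fin m)) (v : F.W μ) : F.ρ m μ g v = v :=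
      (htop ▸ Submodule.mem_top : v ∈ invariants _) g
    have hall : equivariantMaps (F.ρ m μ) (F.ρ m (rowDiagram m)) = ⊤ :=
      eq_top_iff.mpr fun f _ g v => by rw [htriv, F.row_trivial]; rfl
    have := F.hom_ne m μ _ hμ (card_rowDiagram m) hrow
    rw [hall, finrank_top, finrank_linearMap] at this
    exact (Nat.mul_pos finrank_pos finrank_pos).ne' this

theorem le_of_mem_equivariantMaps {m : ℕ} {μ ν : YoungDiagram} (hμ : μ.card = m)
    (hν : ν.card = m + 1) {f : F.W μ →ₗ[K] F.W ν}
    (hf : f ∈ equivariantMaps (F.ρ m μ) (resPerm m (Nat.le_succ m) (F.ρ (m + 1) ν)))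
    (hf0 : f ≠ 0) : μ ≤ ν := by
  by_contra hle
  have hbranch := F.branching m μ ν hμ hν
  rw [if_neg hle, Submodule.finrank_eq_zero] at hbranch
  exact hf0 ((Submodule.eq_bot_iff _).mp hbranch f hf)

theorem exists_equiv_of_isAtom {m : ℕ} {ν : YoungDiagram} (hν : ν.card = m + 1)
    {σ : Subrepresentation (resPerm m (Nat.le_succ m) (F.ρ (m + 1) ν))} (hσ : IsAtom σ) :
    ∃ μ : YoungDiagram, μ.card = m ∧ μ ≤ ν ∧ ∃ e : σ.toSubmodule ≃ₗ[K] F.W μ,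
      ∀ g x, e (σ.toRepresentation g x) = F.ρ m μ g (e x) := by
  have : Nontrivial σ.toSubmodule := Submodule.nontrivial_iff_ne_bot.mpr fun h =>
    hσ.1 (Subrepresentation.toSubmodule_injective h)
  obtain ⟨μ, hμ, e, he⟩ := F.complete m _ σ.toRepresentation this
    (Subrepresentation.eq_bot_or_eq_top_of_isAtom hσ)
  refine ⟨μ, hμ, F.le_of_mem_equivariantMaps hμ hν
    (f := σ.toSubmodule.subtype ∘ₗ e.symm.toLinearMap) (fun g x => ?_) ?_, e, he⟩
  · obtain ⟨y, rfl⟩ := e.surjective x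
    rw [← he]
    simp only [LinearMap.comp_apply, LinearEquiv.coe_coe, LinearEquiv.symm_apply_apply]
    rfl
  · obtain ⟨x, hx⟩ := exists_ne (0 : F.W μ)
    exact fun h0 => hx (by simpa using LinearMap.congr_fun h0 x)

theorem invariants_resPerm_eq_bot [CharZero K] (n : ℕ) :
    ∀ (r : ℕ) {ν : YoungDiagram}, ν.card = n + r → r + ν.rowLen 0 < ν.card →
      invariants (resPerm n (Nat.le_add_right n r) (F.ρ (n + r) ν)) = ⊥
  | 0, ν, hν, hrow => by
    show invariants (resPerm n le_rfl (F.ρ n ν)) = ⊥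
    rw [resPerm_self]
    refine F.invariants_eq_bot hν fun h => ?_
    rw [h, rowLen_rowDiagram, card_rowDiagram] at hrow
    omega
  | s + 1, ν, hν, hrow => by
    have hres : resPerm n (Nat.le_add_right n (s + 1)) (F.ρ (n + (s + 1)) ν) =
        (resPerm (n + s) (Nat.le_succ _) (F.ρ (n + s + 1) ν)).comp
          (permIncl n (n + s) (Nat.le_add_right n s)) :=
      (resPerm_resPerm _ _ _).symm
    rw [hres]
    refine invariants_comp_eq_bot_of_forall_isAtom _ fun σ hσ => ?_
    obtain ⟨μ, hμ, hle, e, he⟩ := F.exists_equiv_of_isAtom (m := n + s) hν hσ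
    have hμinv := invariants_resPerm_eq_bot n s hμ
      (by have := YoungDiagram.rowLen_le_rowLen_of_le hle 0; omega)
    refine (Submodule.eq_bot_iff _).mpr fun x hx => e.injective ?_
    refine (map_zero e).symm ▸ (Submodule.eq_bot_iff _).mp hμinv (e x) fun g => ?_
    show F.ρ (n + s) μ (permIncl n (n + s) _ g) (e x) = e x
    rw [← he]
    exact congrArg e (hx g)

end SpechtFamily

theorem coinvariants_of_res_padded_vanish_general
    (K : Type) [Field K] [CharZero K] (F : SpechtFamily K)
    (lam : YoungDiagram)
    (r n : ℕ) (hr : r < lam.card)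
    (h : lam.card + lam.rowLen 0 ≤ n + r) :
    Subsingleton (coinvariants
      (resPerm n (Nat.le_add_right n r) (F.ρ (n + r) (padDiagram lam (n + r) h)))) := by
  have hcard := card_padDiagram lam (n + r) h
  refine subsingleton_coinvariants_of_invariants_eq_bot _ (F.invariants_resPerm_eq_bot n r hcard ?_)
  rw [hcard, rowLen_padDiagram]
  omega

/-- Let `λ` be a partition, `r ≥ 0`, and `K` a field of characteristic zero.
If `r < |λ|` and `λ ≠ ∅`, then for every `n` (with `n + r ≥ |λ| + λ_1`, so that the padded
partition is defined) the `Σ_n`-coinvariants of `Res^{Σ_{n+r}}_{Σ_n} V_{λ⟨n+r⟩}` vanish, where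
`V_{λ⟨n+r⟩}` is the irreducible `Σ_{n+r}`-representation associated to the padded partition
`λ⟨n+r⟩ = (n+r−|λ|, λ_1, …, λ_ℓ)`. -/
theorem coinvariants_of_res_padded_vanish
    (K : Type) [Field K] [CharZero K] (F : SpechtFamily K)
    (lam : YoungDiagram) (hlam : lam.card ≠ 0)
    (r n : ℕ) (hr : r < lam.card)
    (h : lam.card + lam.rowLen 0 ≤ n + r) :
    Subsingleton (coinvariants
      (resPerm n (Nat.le_add_right n r) (F.ρ (n + r) (padDiagram lam (n + r) h)))) :=
  coinvariants_of_res_padded_vanish_general K F lam r n hr h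
end

section
/- Let X be a connected finite quandle and suppose, as in Shusterman's theorem, that there is N_X such that for all n ≥ N_X and all tuples (x_1,…,x_n) ∈ X^n generating X as a quandle, the pure braid group orbit equals the braid group orbit. Let (G,c) have the non-splitting property. Then there exists N_c such that for all n ≥ N_c, the natural surjection c^n / PBr_n → c^n / Br_n is a bijection. -/
/-! Given a tuple in `c^n` with set of entries `V`, put `S = c ∩ ⟨V⟩`. Non-splitting makes `S`
a subquandle of `Conj G` on which `⟨V⟩ = ⟨S⟩` acts transitively by conjugation, so `S` is a
connected quandle and the tuple generates it. Chains of Hurwitz moves lift along rack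
homomorphisms and push forward along them, so a braid relation in `c^n` lifts to `S^n`, becomes
a pure braid relation there by hypothesis, and maps back along `S → Conj G`. As `G` has finitely
many subsets `V`, the largest of the bounds works for all of them. -/

open scoped Quandles

section HurwitzMoves

variable {Q : Type*} [Rack Q]

/-- The labelled Hurwitz move of the `j`-th Artin braid generator, acting on tuples of
quandle elements together with strand labels: `(x_j, x_{j+1}) ↦ (x_j ◃ x_{j+1}, x_j)`,
the labels moving along with the strands. -/
def rackMove (j : ℕ) (v : ℕ → Q × ℕ) : ℕ → Q × ℕ :=
  fun i => if i = j then ((v j).1 ◃ (v (j + 1)).1, (v (j + 1)).2)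
    else if i = j + 1 then v j else v i

/-- The labelled Hurwitz move of the inverse of the `j`-th Artin generator:
`(x_j, x_{j+1}) ↦ (x_{j+1}, x_{j+1} ◃⁻¹ x_j)`. -/
def rackMoveInv (j : ℕ) (v : ℕ → Q × ℕ) : ℕ → Q × ℕ :=
  fun i => if i = j then v (j + 1)
    else if i = j + 1 then ((v (j + 1)).1 ◃⁻¹ (v j).1, (v j).2) else v i

/-- One labelled Hurwitz move (a braid generator or its inverse) on `n`-tuples. -/
def RackStep (n : ℕ) (v w : ℕ → Q × ℕ) : Prop :=
  ∃ j, j + 1 < n ∧ (w = rackMove j v ∨ w = rackMoveInv j v)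

/-- Labelled Hurwitz reachability: the reflexive-transitive closure of the moves. -/
def RackReach (n : ℕ) : (ℕ → Q × ℕ) → (ℕ → Q × ℕ) → Prop :=
  Relation.ReflTransGen (RackStep n)

/-- The tautological labelling of a tuple. -/
def labelled (v : ℕ → Q) : ℕ → Q × ℕ := fun i => (v i, i)

/-- `v` and `w` lie in the same `Br_n`-orbit of the Hurwitz action on `Q^n`. -/
def BraidReach (n : ℕ) (v w : ℕ → Q) : Prop :=
  ∃ w2 : ℕ → Q × ℕ, RackReach n (labelled v) w2 ∧ ∀ i, i < n → (w2 i).1 = w i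

/-- `v` and `w` lie in the same `PBr_n`-orbit of the Hurwitz action on `Q^n`: they are
connected by a sequence of moves inducing the trivial permutation of the strand labels. -/
def PureBraidReach (n : ℕ) (v w : ℕ → Q) : Prop :=
  ∃ w2 : ℕ → Q × ℕ, RackReach n (labelled v) w2 ∧ ∀ i, i < n → w2 i = (w i, i)

/-- A tuple generates `Q` as a quandle: every subset of `Q` containing its entries and closed
under the quandle operations `◃` and `◃⁻¹` is all of `Q`. -/
def TupleGenerates (n : ℕ) (v : ℕ → Q) : Prop :=
  ∀ S : Set Q, (∀ i, i < n → v i ∈ S) →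
    (∀ x ∈ S, ∀ y ∈ S, x ◃ y ∈ S ∧ x ◃⁻¹ y ∈ S) → ∀ x : Q, x ∈ S

/-- A quandle is connected if its Schreier graph (with edges `(x, y ◃ x)`) is connected. -/
def QuandleConnected (Q' : Type*) [Rack Q'] : Prop :=
  ∀ x y : Q', Relation.ReflTransGen (fun a b => ∃ z : Q', b = z ◃ a ∨ b = z ◃⁻¹ a) x y

end HurwitzMoves

/-- The non-splitting property for `(G, c)`. -/
def NonSplitting {G : Type*} [Group G] (c : Set G) : Prop :=
  Subgroup.closure c = ⊤ ∧
    ∀ H : Subgroup G, (c ∩ (H : Set G)).Nonempty →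
      (∀ x ∈ c ∩ (H : Set G), ∀ h ∈ H, h * x * h⁻¹ ∈ c ∩ (H : Set G)) ∧
      (∀ x ∈ c ∩ (H : Set G), ∀ y ∈ c ∩ (H : Set G), ∃ h ∈ H, y = h * x * h⁻¹)

section Transfer

variable {Q₁ Q₂ : Type*} [Rack Q₁] [Rack Q₂]

def LabelledRel (n : ℕ) (R : Q₁ → Q₂ → Prop) (a : ℕ → Q₁ × ℕ) (b : ℕ → Q₂ × ℕ) : Prop :=
  ∀ i < n, R (a i).1 (b i).1 ∧ (a i).2 = (b i).2

theorem LabelledRel.rackMove {n j : ℕ} {R : Q₁ → Q₂ → Prop}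
    (hact : ∀ {x x' y y'}, R x x' → R y y' → R (x ◃ y) (x' ◃ y'))
    {a : ℕ → Q₁ × ℕ} {b : ℕ → Q₂ × ℕ} (h : LabelledRel n R a b) (hj : j + 1 < n) :
    LabelledRel n R (rackMove j a) (rackMove j b) := by
  intro i hi
  unfold _root_.rackMove
  split_ifs
  · exact ⟨hact (h j (by omega)).1 (h (j + 1) hj).1, (h (j + 1) hj).2⟩
  · exact h j (by omega)
  · exact h i hi

theorem LabelledRel.rackMoveInv {n j : ℕ} {R : Q₁ → Q₂ → Prop}
    (hinv : ∀ {x x' y y'}, R x x' → R y y' → R (x ◃⁻¹ y) (x' ◃⁻¹ y'))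
    {a : ℕ → Q₁ × ℕ} {b : ℕ → Q₂ × ℕ} (h : LabelledRel n R a b) (hj : j + 1 < n) :
    LabelledRel n R (rackMoveInv j a) (rackMoveInv j b) := by
  intro i hi
  unfold _root_.rackMoveInv
  split_ifs
  · exact h (j + 1) hj
  · exact ⟨hinv (h (j + 1) hj).1 (h j (by omega)).1, (h j (by omega)).2⟩
  · exact h i hi

theorem RackReach.exists_labelledRel {n : ℕ} {R : Q₁ → Q₂ → Prop}
    (hact : ∀ {x x' y y'}, R x x' → R y y' → R (x ◃ y) (x' ◃ y'))
    (hinv : ∀ {x x' y y'}, R x x' → R y y' → R (x ◃⁻¹ y) (x' ◃⁻¹ y'))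
    {a b : ℕ → Q₁ × ℕ} (hab : RackReach n a b) {a' : ℕ → Q₂ × ℕ} (ha : LabelledRel n R a a') :
    ∃ b', RackReach n a' b' ∧ LabelledRel n R b b' := by
  induction hab with
  | refl => exact ⟨a', .refl, ha⟩
  | tail _ hstep ih =>
    obtain ⟨b', hb', hrel⟩ := ih
    obtain ⟨j, hj, rfl | rfl⟩ := hstep
    · exact ⟨_, hb'.tail ⟨j, hj, .inl rfl⟩, hrel.rackMove hact hj⟩
    · exact ⟨_, hb'.tail ⟨j, hj, .inr rfl⟩, hrel.rackMoveInv hinv hj⟩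

theorem ShelfHom.map_invAct (f : Q₁ →◃ Q₂) (x y : Q₁) : f (x ◃⁻¹ y) = f x ◃⁻¹ f y := by
  rw [← Rack.left_cancel (f x), Rack.act_invAct_eq, ← f.map_act, Rack.act_invAct_eq]

theorem BraidReach.exists_lift {n : ℕ} (f : Q₁ →◃ Q₂) {v w : ℕ → Q₂} (h : BraidReach n v w)
    {v' : ℕ → Q₁} (hv : ∀ i < n, f (v' i) = v i) :
    ∃ w', BraidReach n v' w' ∧ ∀ i < n, f (w' i) = w i := by
  obtain ⟨u, hu, huw⟩ := h
  obtain ⟨u', hu', hrel⟩ := hu.exists_labelledRel (R := fun x x' => f x' = x)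
    (by rintro _ _ _ _ rfl rfl; exact f.map_act) (by rintro _ _ _ _ rfl rfl; exact f.map_invAct _ _)
    (a' := labelled v') fun i hi => ⟨hv i hi, rfl⟩
  exact ⟨fun i => (u' i).1, ⟨u', hu', fun _ _ => rfl⟩, fun i hi => (hrel i hi).1.trans (huw i hi)⟩

theorem PureBraidReach.map {n : ℕ} (f : Q₁ →◃ Q₂) {v' w' : ℕ → Q₁} (h : PureBraidReach n v' w')
    {v w : ℕ → Q₂} (hv : ∀ i < n, f (v' i) = v i) (hw : ∀ i < n, f (w' i) = w i) :
    PureBraidReach n v w := by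
  obtain ⟨u', hu', hu'w⟩ := h
  obtain ⟨u, hu, hrel⟩ := hu'.exists_labelledRel (R := fun x x' => f x = x')
    (by rintro _ _ _ _ rfl rfl; exact f.map_act) (by rintro _ _ _ _ rfl rfl; exact f.map_invAct _ _)
    (a' := labelled v) fun i hi => ⟨hv i hi, rfl⟩
  refine ⟨u, hu, fun i hi => Prod.ext ?_ ?_⟩
  · rw [← (hrel i hi).1, hu'w i hi, hw i hi]
  · rw [← (hrel i hi).2, hu'w i hi]

end Transfer

def PureOrbitsEventually (X : Type*) [Rack X] : Prop :=
  ∃ NX : ℕ, ∀ n, NX ≤ n → ∀ v w : ℕ → X, TupleGenerates n v →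
    BraidReach n v w → PureBraidReach n v w

structure Subrack (R : Type*) [Rack R] where
  carrier : Set R
  act_mem' {x y : R} : x ∈ carrier → y ∈ carrier → x ◃ y ∈ carrier
  invAct_mem' {x y : R} : x ∈ carrier → y ∈ carrier → x ◃⁻¹ y ∈ carrier

namespace Subrack

variable {R : Type*} [Rack R]

instance : SetLike (Subrack R) R where
  coe := carrier
  coe_injective S T h := by cases S; cases T; congr

instance (S : Subrack R) : Rack S where
  act x y := ⟨x ◃ y, S.act_mem' x.2 y.2⟩
  self_distrib := Subtype.ext Shelf.self_distrib
  invAct x y := ⟨x ◃⁻¹ y, S.invAct_mem' x.2 y.2⟩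
  left_inv x y := Subtype.ext (Rack.left_inv (x : R) y)
  right_inv x y := Subtype.ext (Rack.right_inv (x : R) y)

instance {Q : Type*} [Quandle Q] (S : Subrack Q) : Quandle S where
  fix := Subtype.ext Quandle.fix

def subtype (S : Subrack R) : S →◃ R := ⟨Subtype.val, fun {_ _} => rfl⟩

end Subrack

theorem Subgroup.closure_le_normalizer {G : Type*} [Group G] {A T : Set G}
    (h : ∀ a ∈ A, ∀ x ∈ T, a * x * a⁻¹ ∈ T ∧ a⁻¹ * x * a ∈ T) : closure A ≤ normalizer T :=
  (closure_le _).2 fun a ha x =>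
    ⟨fun hx => (h a ha x hx).1, fun hx => by simpa [mul_assoc] using (h a ha _ hx).2⟩

namespace Subrack

open Subgroup

variable {G : Type*} [Group G]

def ofConjInvariant (T : Set G) (H : Subgroup G) (hTH : T ⊆ H)
    (hT : ∀ x ∈ T, ∀ h ∈ H, h * x * h⁻¹ ∈ T) : Subrack (Quandle.Conj G) where
  carrier := T
  act_mem' hx hy := hT _ hy _ (hTH hx)
  invAct_mem' hx hy := by
    have h := hT _ hy _ (inv_mem (hTH hx))
    rwa [inv_inv] at h

theorem mem_of_conj_mem {S : Subrack (Quandle.Conj G)} {A T : Set S}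
    (hT : ∀ a ∈ A, ∀ x ∈ T, a ◃ x ∈ T ∧ a ◃⁻¹ x ∈ T) {g : G} (hg : g ∈ closure (Subtype.val '' A))
    {x y : S} (hx : x ∈ T) (hy : (y : G) = g * x * g⁻¹) : y ∈ T := by
  have hnorm := closure_le_normalizer (T := Subtype.val '' T) (by
    rintro _ ⟨a, ha, rfl⟩ _ ⟨z, hz, rfl⟩
    exact ⟨⟨_, (hT a ha z hz).1, rfl⟩, ⟨_, (hT a ha z hz).2, rfl⟩⟩) hg
  obtain ⟨y', hy', hy'y⟩ := (hnorm x).1 ⟨x, hx, rfl⟩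
  rw [← hy, ← Subtype.ext_iff] at hy'y
  exact hy'y ▸ hy'

theorem quandleConnected {S : Subrack (Quandle.Conj G)}
    (hS : ∀ x ∈ S, ∀ y ∈ S, ∃ g ∈ closure (S : Set G), y = g * x * g⁻¹) :
    QuandleConnected S := by
  intro x y
  obtain ⟨g, hg, hy⟩ := hS x x.2 y y.2
  refine mem_of_conj_mem (A := .univ) (T := {z | Relation.ReflTransGen _ x z})
    (fun a _ z hz => ⟨hz.tail ⟨a, .inl rfl⟩, hz.tail ⟨a, .inr rfl⟩⟩) ?_ .refl hy
  rwa [Set.image_univ, Subtype.range_coe]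

theorem tupleGenerates {S : Subrack (Quandle.Conj G)} {n : ℕ} {v : ℕ → S}
    (hv : ∀ x : S, ∃ g ∈ closure ((fun i => (v i : G)) '' Set.Iio n), ∃ i < n,
      (x : G) = g * v i * g⁻¹) :
    TupleGenerates n v := by
  intro T hvT hT x
  obtain ⟨g, hg, i, hi, hx⟩ := hv x
  refine mem_of_conj_mem (A := v '' Set.Iio n) (T := T) ?_ ?_ (hvT i hi) hx
  · rintro _ ⟨j, hj, rfl⟩ z hz
    exact hT _ (hvT j hj) z hz
  · rwa [Set.image_image]

theorem exists_bound_of_pureOrbitsEventually (S : Subrack (Quandle.Conj G))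
    (hS : ∀ x ∈ S, ∀ y ∈ S, ∃ g ∈ closure (S : Set G), y = g * x * g⁻¹)
    (hX : PureOrbitsEventually S) :
    ∃ N : ℕ, ∀ n, N ≤ n → ∀ v w : ℕ → Quandle.Conj G, (∀ i < n, v i ∈ S) →
      (S : Set G) ⊆ closure (v '' Set.Iio n) → BraidReach n v w → PureBraidReach n v w := by
  classical
  obtain ⟨NX, hNX⟩ := hX
  refine ⟨max NX 1, fun n hn v w hv hSv h => ?_⟩
  have hn₀ : 0 < n := le_of_max_le_right hn
  -- `v` read in `S`; its values at indices `≥ n` do not matter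
  let v' : ℕ → S := fun i => if hi : v i ∈ S then ⟨v i, hi⟩ else ⟨v 0, hv 0 hn₀⟩
  have hv' : ∀ i < n, (v' i : Quandle.Conj G) = v i := fun i hi => by simp [v', hv i hi]
  obtain ⟨w', hw', hw'w⟩ := h.exists_lift S.subtype hv'
  refine (hNX n (le_of_max_le_left hn) v' w' (tupleGenerates fun x => ?_) hw').map
    S.subtype hv' hw'w
  obtain ⟨g, hg, hx⟩ := hS (v 0) (hv 0 hn₀) x x.2
  refine ⟨g, ?_, 0, hn₀, by simpa [← hv' 0 hn₀] using hx⟩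
  rw [Set.image_congr (s := Set.Iio n) hv']
  exact (closure_le _).2 hSv hg

end Subrack

open Subgroup in
theorem NonSplitting.exists_bound_of_entries_eq {G : Type} [Group G] [Finite G] {c : Set G}
    (hns : NonSplitting c)
    (hShu : ∀ (X : Type) [Fintype X] [Quandle X], QuandleConnected X → PureOrbitsEventually X)
    (V : Set G) :
    ∃ N : ℕ, ∀ n, N ≤ n → ∀ v w : ℕ → Quandle.Conj G, (∀ i < n, v i ∈ c) →
      v '' Set.Iio n = V → BraidReach n v w → PureBraidReach n v w := by
  by_cases hV : V.Nonempty ∧ V ⊆ c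
  · have hVS : V ⊆ c ∩ closure V := fun x hx => ⟨hV.2 hx, subset_closure hx⟩
    obtain ⟨hconj, htrans⟩ := hns.2 (closure V) (hV.1.mono hVS)
    let S := Subrack.ofConjInvariant (c ∩ closure V) (closure V) Set.inter_subset_right hconj
    have hS : ∀ x ∈ S, ∀ y ∈ S, ∃ g ∈ closure (S : Set G), y = g * x * g⁻¹ := fun x hx y hy =>
      let ⟨g, hg, hxy⟩ := htrans x hx y hy
      ⟨g, closure_mono hVS hg, hxy⟩
    have : Fintype S := Fintype.ofFinite S
    obtain ⟨N, hN⟩ := S.exists_bound_of_pureOrbitsEventually hS (hShu S (S.quandleConnected hS))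
    refine ⟨N, fun n hn v w hv hvV => ?_⟩
    subst hvV
    exact hN n hn v w (fun i hi => hVS ⟨i, hi, rfl⟩) Set.inter_subset_right
  · refine ⟨1, fun n hn v w hv hvV _ => (hV ?_).elim⟩
    subst hvV
    exact ⟨⟨v 0, 0, hn, rfl⟩, fun _ ⟨i, hi, hx⟩ => hx ▸ hv i hi⟩

theorem pure_braid_orbits_eq_braid_orbits_general
    (hShu : ∀ (X : Type) [Fintype X] [Quandle X], QuandleConnected X →
      ∃ NX : ℕ, ∀ n, NX ≤ n → ∀ v w : ℕ → X, TupleGenerates n v →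
        BraidReach n v w → PureBraidReach n v w)
    (G : Type) [Group G] [Fintype G] (c : Set G)
    (hns : NonSplitting c) :
    ∃ Nc : ℕ, ∀ n, Nc ≤ n → ∀ v w : ℕ → Quandle.Conj G,
      (∀ i, i < n → v i ∈ c) → (∀ i, i < n → w i ∈ c) →
      BraidReach n v w → PureBraidReach n v w := by
  choose N hN using hns.exists_bound_of_entries_eq hShu
  obtain ⟨Nc, hNc⟩ := (Set.finite_range N).bddAbove
  exact ⟨Nc, fun n hn v w hv _ => hN _ n ((hNc ⟨_, rfl⟩).trans hn) v w hv rfl⟩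

/-- Suppose (as in Shusterman's theorem) that for every connected finite
quandle `X` there is `N_X` such that for all `n ≥ N_X` and all tuples in `X^n` generating `X`
as a quandle, the pure braid group orbit equals the braid group orbit.  Let `G` be a finite
group and `c` a conjugacy class with the non-splitting property.  Then there exists `N_c` such
that for all `n ≥ N_c` the natural surjection `c^n / PBr_n → c^n / Br_n` is a bijection, i.e.
tuples in `c^n` in the same braid orbit are already in the same pure braid orbit. -/
theorem pure_braid_orbits_eq_braid_orbits
    (hShu : ∀ (X : Type) [Fintype X] [Quandle X], QuandleConnected X →
      ∃ NX : ℕ, ∀ n, NX ≤ n → ∀ v w : ℕ → X, TupleGenerates n v →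
        BraidReach n v w → PureBraidReach n v w)
    (G : Type) [Group G] [Fintype G] (c : Set G)
    (hc_ne : c.Nonempty)
    (hc_conj : ∀ x ∈ c, ∀ h : G, h * x * h⁻¹ ∈ c)
    (hc_class : ∀ x ∈ c, ∀ y ∈ c, IsConj x y)
    (hns : NonSplitting c) :
    ∃ Nc : ℕ, ∀ n, Nc ≤ n → ∀ v w : ℕ → Quandle.Conj G,
      (∀ i, i < n → v i ∈ c) → (∀ i, i < n → w i ∈ c) →
      BraidReach n v w → PureBraidReach n v w :=
  pure_braid_orbits_eq_braid_orbits_general hShu G c hns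
end
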